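/- arXiv:2108.09604 — 2 statements merged into one kernel-verified Lean document; each statement's English description precedes it below -/
import Mathlib

section
/- Let $X$ be the number of nonempty bins when $k$ balls are thrown independently and uniformly at random into $m$ bins, and let $\tilde{X}$ be the number of nonempty bins when $k$ balls are thrown independently and uniformly at random into $m + \Delta$ bins, where $\Delta \in \mathbb{N}$. Then $\tilde{X}$ first-order stochastically dominates $X$: for every $\ell$, $\Pr[X \le \ell] \ge \Pr[\tilde{X} \le \ell]$. -/
open Finset

private def cnt (n k ℓ : ℕ) : ℕ :=
  (Finset.univ.filter fun f : Fin k → Fin n => (Finset.image f Finset.univ).card ≤ ℓ).card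

private lemma image_cons_univ {n k : ℕ} (a : Fin n) (g : Fin k → Fin n) :
    Finset.image (Fin.cons a g : Fin (k+1) → Fin n) Finset.univ
      = insert a (Finset.image g Finset.univ) := by
  ext x
  simp [Finset.mem_image, Fin.exists_fin_succ, eq_comm]

private def consE (n k : ℕ) : (Fin k → Fin n) × Fin n ≃ (Fin (k+1) → Fin n) where
  toFun q := Fin.cons q.2 q.1
  invFun f := (Fin.tail f, f 0)
  left_inv q := by simp [Fin.tail_cons]
  right_inv f := by simp [Fin.cons_self_tail]

private lemma cnt_mono (n k : ℕ) {ℓ ℓ' : ℕ} (h : ℓ ≤ ℓ') : cnt n k ℓ ≤ cnt n k ℓ' := by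
  apply Finset.card_le_card
  intro f hf
  simp only [Finset.mem_filter] at *
  exact ⟨hf.1, hf.2.trans h⟩

private lemma cnt_le (n k ℓ : ℕ) : cnt n k ℓ ≤ n ^ k := by
  calc cnt n k ℓ ≤ (Finset.univ : Finset (Fin k → Fin n)).card := Finset.card_filter_le _ _
    _ = n ^ k := by simp [Finset.card_univ]

private lemma cnt_zero (n ℓ : ℕ) : cnt n 0 ℓ = 1 := by
  simp [cnt]

private lemma cnt_succ_zero (n k : ℕ) : cnt n (k+1) 0 = 0 := by
  rw [cnt, Finset.card_eq_zero, Finset.filter_eq_empty_iff]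
  intro f _
  simp only [Nat.le_zero, Finset.card_eq_zero, Finset.image_eq_empty, not_le]
  simp [← Finset.nonempty_iff_ne_empty, Finset.univ_nonempty]

private lemma cnt_of_le (n k ℓ : ℕ) (h : n ≤ ℓ) : cnt n k ℓ = n ^ k := by
  rw [cnt, Finset.filter_true_of_mem, Finset.card_univ]
  · simp
  · intro f _
    calc (Finset.image f Finset.univ).card ≤ (Finset.univ : Finset (Fin n)).card :=
          Finset.card_le_card (Finset.subset_univ _)
      _ = n := by simp
      _ ≤ ℓ := h

private lemma cnt_rec (n k t : ℕ) :
    cnt n (k+1) (t+1) + (t+1) * cnt n k t = n * cnt n k t + (t+1) * cnt n k (t+1) := by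
  -- step 1: cnt n (k+1) (t+1) as a sum over tails
  have hstep : cnt n (k+1) (t+1)
      = ∑ g : Fin k → Fin n,
          (Finset.univ.filter fun a : Fin n =>
            (insert a (Finset.image g Finset.univ)).card ≤ t+1).card := by
    rw [cnt, ← Fintype.card_subtype]
    rw [Fintype.card_congr (((consE n k).subtypeEquiv (fun q => Iff.rfl)).symm)]
    rw [Fintype.card_congr (Equiv.subtypeProdEquivSigmaSubtype
      (fun (g : Fin k → Fin n) (a : Fin n) =>
        (Finset.image (consE n k (g, a)) Finset.univ).card ≤ t+1))]
    rw [Fintype.card_sigma]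
    refine Finset.sum_congr rfl fun g _ => ?_
    rw [Fintype.card_subtype]
    congr 1
    ext a
    simp only [Finset.mem_filter, Finset.mem_univ, true_and, consE, Equiv.coe_fn_mk,
      image_cons_univ]
  -- pointwise identity
  have hg : ∀ g : Fin k → Fin n,
      (Finset.univ.filter fun a : Fin n =>
         (insert a (Finset.image g Finset.univ)).card ≤ t+1).card
        + (if (Finset.image g Finset.univ).card ≤ t then t+1 else 0)
      = (if (Finset.image g Finset.univ).card ≤ t then n else 0)
        + (if (Finset.image g Finset.univ).card ≤ t+1 then t+1 else 0) := by
    intro g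
    set s := Finset.image g Finset.univ with hs
    rcases lt_trichotomy s.card (t+1) with hj | hj | hj
    · have hj' : s.card ≤ t := Nat.lt_succ_iff.mp hj
      have hj2 : s.card ≤ t + 1 := by omega
      have : (Finset.univ.filter fun a : Fin n => (insert a s).card ≤ t+1) = Finset.univ := by
        apply Finset.filter_true_of_mem
        intro a _
        calc (insert a s).card ≤ s.card + 1 := Finset.card_insert_le _ _
          _ ≤ t + 1 := by omega
      rw [this]
      simp [hj', hj2, Finset.card_univ]
    · have hj' : ¬ s.card ≤ t := by omega
      have hj2 : s.card ≤ t + 1 := by omega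
      have : (Finset.univ.filter fun a : Fin n => (insert a s).card ≤ t+1) = s := by
        ext a
        simp only [Finset.mem_filter, Finset.mem_univ, true_and]
        constructor
        · intro h
          by_contra has
          rw [Finset.card_insert_of_notMem has] at h
          omega
        · intro h
          rw [Finset.insert_eq_self.mpr h]
          omega
      rw [this]
      simp [hj', hj2, hj]
    · have hj' : ¬ s.card ≤ t := by omega
      have hj'' : ¬ s.card ≤ t + 1 := by omega
      have : (Finset.univ.filter fun a : Fin n => (insert a s).card ≤ t+1) = ∅ := by
        apply Finset.filter_eq_empty_iff.mpr
        intro a _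
        have : s.card ≤ (insert a s).card := Finset.card_le_card (Finset.subset_insert _ _)
        omega
      rw [this]
      simp [hj', hj'']
  -- sum up
  have hsum := Finset.sum_congr rfl (fun g (_ : g ∈ (Finset.univ : Finset (Fin k → Fin n))) => hg g)
  rw [Finset.sum_add_distrib, Finset.sum_add_distrib, ← hstep] at hsum
  have e1 : ∑ g : Fin k → Fin n,
      (if (Finset.image g Finset.univ).card ≤ t then t+1 else 0) = (t+1) * cnt n k t := by
    rw [← Finset.sum_filter, Finset.sum_const, smul_eq_mul, mul_comm]
    rfl
  have e2 : ∑ g : Fin k → Fin n,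
      (if (Finset.image g Finset.univ).card ≤ t then n else 0) = n * cnt n k t := by
    rw [← Finset.sum_filter, Finset.sum_const, smul_eq_mul, mul_comm]
    rfl
  have e3 : ∑ g : Fin k → Fin n,
      (if (Finset.image g Finset.univ).card ≤ t+1 then t+1 else 0) = (t+1) * cnt n k (t+1) := by
    rw [← Finset.sum_filter, Finset.sum_const, smul_eq_mul, mul_comm]
    rfl
  rw [e1, e2, e3] at hsum
  exact hsum

private lemma key (m Δ : ℕ) (hm : 1 ≤ m) :
    ∀ k ℓ : ℕ, (cnt (m+Δ) k ℓ : ℝ) / ((m+Δ : ℕ) : ℝ) ^ k ≤ (cnt m k ℓ : ℝ) / (m : ℝ) ^ k := by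
  have hm0 : (0:ℝ) < (m:ℝ) := by exact_mod_cast hm
  have hN0 : (0:ℝ) < ((m+Δ : ℕ):ℝ) := by
    have : (0:ℕ) < m + Δ := by omega
    exact_mod_cast this
  intro k
  induction k with
  | zero => intro ℓ; simp [cnt_zero]
  | succ k ih =>
    intro ℓ
    have hmk : (0:ℝ) < (m:ℝ) ^ (k+1) := by positivity
    have hNk : (0:ℝ) < ((m+Δ:ℕ):ℝ) ^ (k+1) := by positivity
    match ℓ with
    | 0 =>
      rw [cnt_succ_zero, cnt_succ_zero]
      simp
    | (t+1) =>
      by_cases hl : m ≤ t + 1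
      · rw [cnt_of_le m (k+1) (t+1) hl]
        have hc : ((m ^ (k+1) : ℕ) : ℝ) = (m:ℝ)^(k+1) := by push_cast; ring
        rw [hc, div_self (ne_of_gt hmk), div_le_one hNk]
        calc (cnt (m+Δ) (k+1) (t+1) : ℝ) ≤ (((m+Δ) ^ (k+1) : ℕ) : ℝ) := by
              exact_mod_cast cnt_le (m+Δ) (k+1) (t+1)
          _ = ((m+Δ:ℕ):ℝ)^(k+1) := by push_cast; ring
      · have hlt : t + 1 < m := by omega
        have h1 : (cnt m (k+1) (t+1) : ℝ)
            = (m:ℝ) * cnt m k t + ((t:ℝ)+1) * cnt m k (t+1) - ((t:ℝ)+1) * cnt m k t := by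
          have h := congrArg (fun x : ℕ => (x : ℝ)) (cnt_rec m k t)
          push_cast at h
          linarith
        have h2 : (cnt (m+Δ) (k+1) (t+1) : ℝ)
            = ((m+Δ:ℕ):ℝ) * cnt (m+Δ) k t + ((t:ℝ)+1) * cnt (m+Δ) k (t+1)
              - ((t:ℝ)+1) * cnt (m+Δ) k t := by
          have h := congrArg (fun x : ℕ => (x : ℝ)) (cnt_rec (m+Δ) k t)
          push_cast at h
          push_cast
          linarith
        set a : ℝ := (cnt m k t : ℝ) / (m:ℝ)^k with ha
        set b : ℝ := (cnt m k (t+1) : ℝ) / (m:ℝ)^k with hb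
        set a' : ℝ := (cnt (m+Δ) k t : ℝ) / ((m+Δ:ℕ):ℝ)^k with ha'
        set b' : ℝ := (cnt (m+Δ) k (t+1) : ℝ) / ((m+Δ:ℕ):ℝ)^k with hb'
        set c : ℝ := ((t:ℝ)+1) / (m:ℝ) with hc
        set c' : ℝ := ((t:ℝ)+1) / ((m+Δ:ℕ):ℝ) with hc'
        have hmne : (m:ℝ) ≠ 0 := ne_of_gt hm0
        have hNne : ((m+Δ:ℕ):ℝ) ≠ 0 := ne_of_gt hN0
        have hL : (cnt (m+Δ) (k+1) (t+1) : ℝ) / ((m+Δ:ℕ):ℝ)^(k+1)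
            = (1 - c') * a' + c' * b' := by
          rw [h2, ha', hb', hc']
          field_simp
          ring
        have hR : (cnt m (k+1) (t+1) : ℝ) / (m:ℝ)^(k+1) = (1 - c) * a + c * b := by
          rw [h1, ha, hb, hc]
          field_simp
          ring
        rw [hL, hR]
        have iha : a' ≤ a := ih t
        have ihb : b' ≤ b := ih (t+1)
        have hab : a ≤ b := by
          rw [ha, hb]
          gcongr
          exact_mod_cast cnt_mono m k (Nat.le_succ t)
        have hc'0 : 0 ≤ c' := by rw [hc']; positivity
        have hcc' : c' ≤ c := by
          rw [hc, hc']
          apply div_le_div_of_nonneg_left (by positivity) hm0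
          exact_mod_cast Nat.le_add_right m Δ
        have hc1 : c ≤ 1 := by
          rw [hc, div_le_one hm0]
          exact_mod_cast Nat.le_of_lt hlt
        nlinarith [mul_nonneg (by linarith : (0:ℝ) ≤ 1 - c') (by linarith : (0:ℝ) ≤ a - a'),
          mul_nonneg hc'0 (by linarith : (0:ℝ) ≤ b - b'),
          mul_nonneg (by linarith : (0:ℝ) ≤ c - c') (by linarith : (0:ℝ) ≤ b - a)]

/-- Balls-and-bins stochastic dominance: the number of nonempty bins with
`m + Δ` bins first-order stochastically dominates the number with `m` bins:
for every `ℓ`, `Pr[X ≤ ℓ] ≥ Pr[X̃ ≤ ℓ]`, where throws are uniform and independent. -/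
theorem stmt3 (k m Δ ℓ : ℕ) (hm : 1 ≤ m) :
    ((Finset.univ.filter
        (fun f : Fin k → Fin (m + Δ) => (Finset.image f Finset.univ).card ≤ ℓ)).card : ℝ)
        / ((m + Δ : ℕ) : ℝ) ^ k
      ≤ ((Finset.univ.filter
        (fun f : Fin k → Fin m => (Finset.image f Finset.univ).card ≤ ℓ)).card : ℝ)
        / (m : ℝ) ^ k := by
  exact key m Δ hm k ℓ
end

section
/- In a round where at least one of $n$ nodes (of which $b$ are corrupt and $n-b$ are honest, each mining a block independently with probability $p$) mines a block, the conditional probability that only honest nodes mine is $p_{+1} = \frac{(1-p)^b (1-(1-p)^{n-b})}{1-(1-p)^n}$ and the conditional probability that only corrupt nodes mine is $p_{-1} = \frac{(1-(1-p)^b)(1-p)^{n-b}}{1-(1-p)^n}$. Moreover, if $b < n/2$ and $0 < p < 1$, then $p_{+1} > p_{-1}$. -/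
open Finset in
private lemma sum_prod_constrained (n : ℕ) (P : Fin n → Prop) [DecidablePred P] (p : ℝ) :
    ∑ f ∈ Finset.univ.filter (fun f : Fin n → Bool => ∀ i, P i → f i = false),
      ∏ i, (if f i then p else 1 - p)
    = ∏ i, (if P i then (1 - p) else 1) := by
  rw [Finset.sum_filter]
  have key : ∀ f : Fin n → Bool,
      (if (∀ i, P i → f i = false) then ∏ i, (if f i then p else 1 - p) else 0)
      = ∏ i, (if P i ∧ f i = true then 0 else if f i then p else 1 - p) := by
    intro f
    by_cases h : ∀ i, P i → f i = false
    · rw [if_pos h]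
      refine Finset.prod_congr rfl fun i _ => ?_
      have : ¬ (P i ∧ f i = true) := fun ⟨hP, ht⟩ => by simp [h i hP] at ht
      rw [if_neg this]
    · rw [if_neg h]
      push_neg at h
      obtain ⟨i, hPi, hfi⟩ := h
      refine (Finset.prod_eq_zero (Finset.mem_univ i) ?_).symm
      simp [hPi, hfi]
  simp_rw [key]
  rw [← Fintype.prod_sum fun (i : Fin n) (c : Bool) => if P i ∧ c = true then 0 else if c = true then p else 1 - p]
  refine Finset.prod_congr rfl fun i _ => ?_
  rw [Fintype.sum_bool]
  by_cases hP : P i <;> simp [hP] <;> ring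

open Finset in
private lemma filter_exists_eq (n : ℕ) (C : (Fin n → Bool) → Prop) [DecidablePred C]
    (hC : C (fun _ => false)) :
    Finset.univ.filter (fun f : Fin n → Bool => (∃ i, f i = true) ∧ C f)
      = (Finset.univ.filter C) \ {fun _ => false} := by
  ext f
  simp only [Finset.mem_filter, Finset.mem_univ, true_and, Finset.mem_sdiff,
    Finset.mem_singleton]
  constructor
  · rintro ⟨⟨i, hi⟩, hCf⟩
    exact ⟨hCf, fun h => by rw [h] at hi; exact Bool.false_ne_true hi⟩
  · rintro ⟨hCf, hne⟩
    refine ⟨?_, hCf⟩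
    by_contra h
    push_neg at h
    exact hne (funext fun i => by simpa using h i)

open Finset in
private lemma sum_filter_exists (n : ℕ) (C : (Fin n → Bool) → Prop) [DecidablePred C]
    (hC : C (fun _ => false)) (p : ℝ) :
    ∑ f ∈ Finset.univ.filter (fun f : Fin n → Bool => (∃ i, f i = true) ∧ C f),
      ∏ i, (if f i then p else 1 - p)
    = (∑ f ∈ Finset.univ.filter C, ∏ i : Fin n, (if f i then p else 1 - p))
        - (1 - p) ^ n := by
  rw [filter_exists_eq n C hC]
  rw [Finset.sum_sdiff_eq_sub (by simp [hC])]
  simp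

private lemma card_filter_lt (n b : ℕ) (hb : b ≤ n) :
    (Finset.univ.filter (fun i : Fin n => (i : ℕ) < b)).card = b := by
  have : Finset.univ.filter (fun i : Fin n => (i : ℕ) < b)
      = Finset.map (Fin.castLEEmb hb) Finset.univ := by
    ext i
    simp only [Finset.mem_filter, Finset.mem_univ, true_and, Finset.mem_map]
    constructor
    · intro h; exact ⟨⟨i, h⟩, Fin.ext rfl⟩
    · rintro ⟨j, rfl⟩; simpa using j.isLt
  rw [this]; simp

open Classical in
/-- Conditioned on at least one of `n` nodes (the first `b` corrupt, each mining
independently with probability `p`) mining a block, the probability that only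
honest nodes mine is `p₊ = (1-p)^b (1-(1-p)^(n-b)) / (1-(1-p)^n)` and the
probability that only corrupt nodes mine is
`p₋ = (1-(1-p)^b)(1-p)^(n-b) / (1-(1-p)^n)`; moreover if `b < n/2` then `p₊ > p₋`. -/
theorem stmt5 (n b : ℕ) (hb : b ≤ n) (p : ℝ) (hp0 : 0 < p) (hp1 : p < 1) :
    (∑ f ∈ Finset.univ.filter (fun f : Fin n → Bool =>
        (∃ i, f i = true) ∧ ∀ i : Fin n, (i : ℕ) < b → f i = false),
        ∏ i : Fin n, (if f i then p else 1 - p)) /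
      (∑ f ∈ Finset.univ.filter (fun f : Fin n → Bool => ∃ i, f i = true),
        ∏ i : Fin n, (if f i then p else 1 - p))
      = (1 - p) ^ b * (1 - (1 - p) ^ (n - b)) / (1 - (1 - p) ^ n) ∧
    (∑ f ∈ Finset.univ.filter (fun f : Fin n → Bool =>
        (∃ i, f i = true) ∧ ∀ i : Fin n, b ≤ (i : ℕ) → f i = false),
        ∏ i : Fin n, (if f i then p else 1 - p)) /
      (∑ f ∈ Finset.univ.filter (fun f : Fin n → Bool => ∃ i, f i = true),
        ∏ i : Fin n, (if f i then p else 1 - p))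
      = (1 - (1 - p) ^ b) * (1 - p) ^ (n - b) / (1 - (1 - p) ^ n) ∧
    (2 * b < n →
      (1 - (1 - p) ^ b) * (1 - p) ^ (n - b) / (1 - (1 - p) ^ n)
        < (1 - p) ^ b * (1 - (1 - p) ^ (n - b)) / (1 - (1 - p) ^ n)) := by
  set q : ℝ := 1 - p with hq
  have hq0 : 0 < q := by simp [hq]; linarith
  have hq1 : q < 1 := by simp [hq]; linarith
  -- cardinal of complement filter
  have hcard_lt : (Finset.univ.filter (fun i : Fin n => (i : ℕ) < b)).card = b :=
    card_filter_lt n b hb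
  have hcard_ge : (Finset.univ.filter (fun i : Fin n => b ≤ (i : ℕ))).card = n - b := by
    have h := Finset.card_filter_add_card_filter_not
      (s := (Finset.univ : Finset (Fin n))) (p := fun i : Fin n => (i : ℕ) < b)
    simp only [Finset.card_univ, Fintype.card_fin, hcard_lt, not_lt] at h
    omega
  -- generic constrained sums
  have hsum1 : (∑ f ∈ Finset.univ.filter (fun f : Fin n → Bool =>
        ∀ i : Fin n, (i : ℕ) < b → f i = false),
        ∏ i : Fin n, (if f i then p else 1 - p)) = q ^ b := by
    rw [sum_prod_constrained n (fun i => (i : ℕ) < b) p, Finset.prod_ite,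
      Finset.prod_const, Finset.prod_const, one_pow, mul_one, hcard_lt]
  have hsum2 : (∑ f ∈ Finset.univ.filter (fun f : Fin n → Bool =>
        ∀ i : Fin n, b ≤ (i : ℕ) → f i = false),
        ∏ i : Fin n, (if f i then p else 1 - p)) = q ^ (n - b) := by
    rw [sum_prod_constrained n (fun i => b ≤ (i : ℕ)) p, Finset.prod_ite,
      Finset.prod_const, Finset.prod_const, one_pow, mul_one, hcard_ge]
  have hsumall : (∑ f ∈ Finset.univ.filter (fun f : Fin n → Bool =>
        ∀ i : Fin n, False → f i = false),
        ∏ i : Fin n, (if f i then p else 1 - p)) = 1 := by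
    rw [sum_prod_constrained n (fun _ => False) p]
    simp
  -- numerator 1
  have hnum1 : (∑ f ∈ Finset.univ.filter (fun f : Fin n → Bool =>
        (∃ i, f i = true) ∧ ∀ i : Fin n, (i : ℕ) < b → f i = false),
        ∏ i : Fin n, (if f i then p else 1 - p)) = q ^ b - q ^ n := by
    rw [sum_filter_exists n (fun f => ∀ i : Fin n, (i : ℕ) < b → f i = false)
      (by simp) p, hsum1]
  have hnum2 : (∑ f ∈ Finset.univ.filter (fun f : Fin n → Bool =>
        (∃ i, f i = true) ∧ ∀ i : Fin n, b ≤ (i : ℕ) → f i = false),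
        ∏ i : Fin n, (if f i then p else 1 - p)) = q ^ (n - b) - q ^ n := by
    rw [sum_filter_exists n (fun f => ∀ i : Fin n, b ≤ (i : ℕ) → f i = false)
      (by simp) p, hsum2]
  have hden : (∑ f ∈ Finset.univ.filter (fun f : Fin n → Bool => ∃ i, f i = true),
        ∏ i : Fin n, (if f i then p else 1 - p)) = 1 - q ^ n := by
    have := sum_filter_exists n (fun f => ∀ i : Fin n, False → f i = false) (by simp) p
    rw [hsumall] at this
    rw [← this]
    congr 1
    ext f
    simp
  have hpow : q ^ b * q ^ (n - b) = q ^ n := by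
    rw [← pow_add, Nat.add_sub_cancel' hb]
  refine ⟨?_, ?_, ?_⟩
  · rw [hnum1, hden]
    congr 1
    rw [mul_sub, mul_one, hpow]
  · rw [hnum2, hden]
    congr 1
    rw [sub_mul, one_mul, hpow]
  · intro h2b
    have hden_pos : 0 < 1 - q ^ n := by
      have : q ^ n < 1 := pow_lt_one₀ hq0.le hq1 (by omega)
      linarith
    rw [div_lt_div_iff_of_pos_right hden_pos]
    have hlt : q ^ (n - b) < q ^ b :=
      pow_lt_pow_right_of_lt_one₀ hq0 hq1 (by omega)
    nlinarith [hpow]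
end
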